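/- arXiv:2404.17924 — 2 statements merged into one kernel-verified Lean document; each statement's English description precedes it below -/
import Mathlib

section
/- Assume all gamble sets are finite subsets of 𝒢. If 𝒦 ⊆ 𝒫_fin(𝒢) satisfies the superset axiom (A ∈ 𝒦 and finite B ⊇ A imply B ∈ 𝒦) and the pairwise addition axiom KAddPair, then 𝒦 satisfies the general finite addition axiom KAdd: for A₁,…,Aₙ ∈ 𝒦 and any choice f_{(g₁,…,gₙ)} ∈ posi({g₁,…,gₙ}) for each (g₁,…,gₙ) ∈ A₁×…×Aₙ, the set {f_{(g₁,…,gₙ)} : (gᵢ) ∈ A₁×…×Aₙ} is in 𝒦. -/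
open scoped BigOperators

universe u v

def GambleSpace (Ω : Type v) : Submodule ℝ (Ω → ℝ) where
  carrier := {f | ∃ M, ∀ ω, |f ω| ≤ M}
  add_mem' := by
    rintro f g ⟨M, hM⟩ ⟨N, hN⟩
    exact ⟨M + N, fun ω => (abs_add_le _ _).trans (add_le_add (hM ω) (hN ω))⟩
  zero_mem' := ⟨0, fun ω => by simp⟩
  smul_mem' := by
    rintro c f ⟨M, hM⟩
    exact ⟨|c| * M, fun ω => by
      simpa [abs_mul] using mul_le_mul_of_nonneg_left (hM ω) (abs_nonneg c)⟩

/-- The type of gambles: bounded functions `Ω → ℝ`. -/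
abbrev Gamble (Ω : Type v) := GambleSpace Ω

/-- Pointwise order on gambles: `gle f g` means `f ≤ g` pointwise. -/
def gle {Ω : Type v} (f g : Gamble Ω) : Prop := ∀ ω, (f : Ω → ℝ) ω ≤ (g : Ω → ℝ) ω

/-- Gambles weakly dominating `0`. -/
def Gpos (Ω : Type v) : Set (Gamble Ω) := {g | gle 0 g ∧ g ≠ 0}

/-- Positive linear hull: finite positive combinations of members of `B`. -/
def posi {Ω : Type v} (B : Set (Gamble Ω)) : Set (Gamble Ω) :=
  {f | ∃ n : ℕ, 0 < n ∧ ∃ (l : Fin n → ℝ) (g : Fin n → Gamble Ω),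
    (∀ i, 0 < l i) ∧ (∀ i, g i ∈ B) ∧ f = ∑ i, l i • g i}

/-- Natural extension of a set of gambles. -/
def desext {Ω : Type v} (E : Set (Gamble Ω)) : Set (Gamble Ω) := posi (E ∪ Gpos Ω)

/-- Coherence for a set of desirable gambles. -/
def CoherentD {Ω : Type v} (D : Set (Gamble Ω)) : Prop :=
  (0 : Gamble Ω) ∉ D ∧ Gpos Ω ⊆ D ∧
  (∀ g ∈ D, ∀ l : ℝ, 0 < l → l • g ∈ D) ∧
  (∀ f ∈ D, ∀ g ∈ D, f + g ∈ D)

/-- Coherence for a set of desirable gamble sets. -/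
def CoherentK {Ω : Type v} (K : Set (Set (Gamble Ω))) : Prop :=
  (∅ : Set (Gamble Ω)) ∉ K ∧
  (∀ A ∈ K, A \ {0} ∈ K) ∧
  (∀ g ∈ Gpos Ω, ({g} : Set (Gamble Ω)) ∈ K) ∧
  (∀ A ∈ K, ∀ B : Set (Gamble Ω), A ⊆ B → B ∈ K) ∧
  (∀ A ∈ K, ∀ F : Gamble Ω → Gamble Ω, (∀ g ∈ A, gle g (F g)) → F '' A ∈ K) ∧
  (∀ n : ℕ, 0 < n → ∀ A : Fin n → Set (Gamble Ω), (∀ i, A i ∈ K) →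
    ∀ F : (Fin n → Gamble Ω) → Gamble Ω,
    (∀ g : Fin n → Gamble Ω, (∀ i, g i ∈ A i) → F g ∈ posi (Set.range g)) →
    {b | ∃ g : Fin n → Gamble Ω, (∀ i, g i ∈ A i) ∧ b = F g} ∈ K)

/-- The infinite addition axiom. -/
def KAddInf {Ω : Type v} (K : Set (Set (Gamble Ω))) : Prop :=
  ∀ (I : Type v) (A : I → Set (Gamble Ω)), (∀ i, A i ∈ K) →
    ∀ F : (I → Gamble Ω) → Gamble Ω,
    (∀ g : I → Gamble Ω, (∀ i, g i ∈ A i) → F g ∈ posi (Set.range g)) →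
    {b | ∃ g : I → Gamble Ω, (∀ i, g i ∈ A i) ∧ b = F g} ∈ K

/-- Natural extension of a set of gamble sets (nonempty case). -/
def ExtK {Ω : Type v} (𝒜 : Set (Set (Gamble Ω))) : Set (Set (Gamble Ω)) :=
  {B | ∃ n : ℕ, 0 < n ∧ ∃ A : Fin n → Set (Gamble Ω), (∀ i, A i ∈ 𝒜) ∧
    ∀ g : Fin n → Gamble Ω, (∀ i, g i ∈ A i) →
      (0 : Gamble Ω) ∉ desext (Set.range g) → ∃ f ∈ B, f ∈ desext (Set.range g)}

/-!
Induct on the number `n` of sets, proving only that some member of `𝒦` lies inside the target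
set; since that set is finite, the superset axiom then puts it in `𝒦`. For `n ≥ 2` the elements
`a` of the finite set `A 0` are replaced one at a time: writing `f(a, g') ∈ posi ({a} ∪ range g')`
as an element of `posi {a, v(g')}` with `v(g') ∈ posi (range g')`, the induction hypothesis puts
(a subset of) `{v(g')}` into `𝒦`, and one application of `KAddPair` to the current set and that
set replaces `a` by the gambles `f(a, g')`.
-/

section Posi

variable {Ω : Type v}

lemma posi_mono {B C : Set (Gamble Ω)} (h : B ⊆ C) : posi B ⊆ posi C := by
  rintro f ⟨n, hn, l, g, hl, hg, rfl⟩
  exact ⟨n, hn, l, g, hl, fun i => h (hg i), rfl⟩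

lemma mem_posi_of_mem {B : Set (Gamble Ω)} {b : Gamble Ω} (hb : b ∈ B) : b ∈ posi B :=
  ⟨1, one_pos, fun _ => 1, fun _ => b, fun _ => one_pos, fun _ => hb, by simp⟩

lemma smul_mem_posi {B : Set (Gamble Ω)} {c : ℝ} (hc : 0 < c) {b : Gamble Ω} (hb : b ∈ B) :
    c • b ∈ posi B :=
  ⟨1, one_pos, fun _ => c, fun _ => b, fun _ => hc, fun _ => hb, by simp⟩

lemma add_mem_posi {B : Set (Gamble Ω)} {f g : Gamble Ω}
    (hf : f ∈ posi B) (hg : g ∈ posi B) : f + g ∈ posi B := by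
  obtain ⟨n, hn, l, u, hl, hu, rfl⟩ := hf
  obtain ⟨k, hk, l', u', hl', hu', rfl⟩ := hg
  refine ⟨n + k, by omega, Fin.append l l', Fin.append u u',
    Fin.addCases (by simpa using hl) (by simpa using hl'),
    Fin.addCases (by simpa using hu) (by simpa using hu'), ?_⟩
  simp [Fin.sum_univ_add]

theorem posi_induction {B : Set (Gamble Ω)} {motive : ∀ f, f ∈ posi B → Prop}
    (smul : ∀ (c : ℝ) (hc : 0 < c) (b : Gamble Ω) (hb : b ∈ B), motive (c • b) (smul_mem_posi hc hb))
    (add : ∀ f g hf hg, motive f hf → motive g hg → motive (f + g) (add_mem_posi hf hg))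
    {f : Gamble Ω} (hf : f ∈ posi B) : motive f hf := by
  obtain ⟨n, hn, l, g, hl, hg, rfl⟩ := hf
  obtain ⟨n, rfl⟩ := Nat.exists_eq_add_one_of_ne_zero hn.ne'
  induction n with
  | zero => simpa using smul _ (hl 0) _ (hg 0)
  | succ n ih =>
    have h := add _ _ _ _ (smul _ (hl 0) _ (hg 0))
      (ih n.succ_pos (fun i => l i.succ) (fun i => g i.succ) (fun _ => hl _) (fun _ => hg _))
    exact cast (by congr 1; exact (Fin.sum_univ_succ fun i => l i • g i).symm) h

lemma exists_of_mem_posi_insert {a f : Gamble Ω} {B : Set (Gamble Ω)}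
    (hf : f ∈ posi (insert a B)) :
    (∃ c : ℝ, 0 < c ∧ f = c • a) ∨ ∃ c : ℝ, 0 ≤ c ∧ ∃ t ∈ posi B, f = c • a + t := by
  induction hf using posi_induction with
  | smul c hc b hb =>
    rcases hb with rfl | hb
    · exact .inl ⟨c, hc, rfl⟩
    · exact .inr ⟨0, le_rfl, c • b, smul_mem_posi hc hb, by simp⟩
  | add f g _ _ hf hg =>
    rcases hf with ⟨c, hc, rfl⟩ | ⟨c, hc, t, ht, rfl⟩ <;>
      rcases hg with ⟨d, hd, rfl⟩ | ⟨d, hd, s, hs, rfl⟩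
    · exact .inl ⟨c + d, by positivity, by module⟩
    · exact .inr ⟨c + d, by positivity, s, hs, by module⟩
    · exact .inr ⟨c + d, by positivity, t, ht, by module⟩
    · exact .inr ⟨c + d, by positivity, t + s, add_mem_posi ht hs, by module⟩

lemma exists_mem_posi_pair_of_mem_posi_insert {a f : Gamble Ω} {B : Set (Gamble Ω)}
    (hB : B.Nonempty) (hf : f ∈ posi (insert a B)) : ∃ v ∈ posi B, f ∈ posi {a, v} := by
  rcases exists_of_mem_posi_insert hf with ⟨c, hc, rfl⟩ | ⟨c, hc, t, ht, rfl⟩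
  · obtain ⟨b, hb⟩ := hB
    exact ⟨b, mem_posi_of_mem hb, smul_mem_posi hc (by simp)⟩
  · refine ⟨t, ht, ?_⟩
    rcases hc.eq_or_lt with rfl | hc
    · simpa using mem_posi_of_mem (by simp : t ∈ ({a, t} : Set (Gamble Ω)))
    · exact add_mem_posi (smul_mem_posi hc (by simp)) (mem_posi_of_mem (by simp))

end Posi

lemma exists_mem_subset_of_forall_remove {α : Type*} {K : Set (Set α)} {s T : Set α}
    (hs : s.Finite) (hremove : ∀ a ∈ s, ∀ U ∈ K, ∃ U' ∈ K, U' ⊆ U \ {a} ∪ T)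
    {U : Set α} (hU : U ∈ K) (hUs : U ⊆ s ∪ T) : ∃ B ∈ K, B ⊆ T := by
  induction s, hs using Set.Finite.induction_on generalizing U with
  | empty => exact ⟨U, hU, by simpa using hUs⟩
  | @insert a s _ _ ih =>
    obtain ⟨U', hU', hU'U⟩ := hremove a (Set.mem_insert a s) U hU
    refine ih (fun b hb => hremove b (Set.mem_insert_of_mem a hb)) hU' (hU'U.trans ?_)
    intro x hx
    have := @hUs x
    simp only [Set.mem_union, Set.mem_sdiff, Set.mem_insert_iff, Set.mem_singleton_iff] at hx this ⊢
    tauto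

def KAddPair {Ω : Type v} (K : Set (Set (Gamble Ω))) : Prop :=
  ∀ A₁ ∈ K, ∀ A₂ ∈ K, ∀ F : Gamble Ω × Gamble Ω → Gamble Ω,
    (∀ g₁ ∈ A₁, ∀ g₂ ∈ A₂, F (g₁, g₂) ∈ posi {g₁, g₂}) →
    {b | ∃ g₁ ∈ A₁, ∃ g₂ ∈ A₂, b = F (g₁, g₂)} ∈ K

namespace KAddPair

variable {Ω : Type v} {K : Set (Set (Gamble Ω))}

lemma exists_mem_subset_image2 (hK : KAddPair K) {U V : Set (Gamble Ω)} (hU : U ∈ K)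
    (hV : V ∈ K) {ι : Type*} {S : Set ι} {w : ι → Gamble Ω} (hVS : V ⊆ w '' S)
    (H : Gamble Ω → ι → Gamble Ω) (hH : ∀ u ∈ U, ∀ i ∈ S, H u i ∈ posi {u, w i}) :
    ∃ B ∈ K, B ⊆ Set.image2 H U S := by
  classical
  choose i hiS hwi using hVS
  refine ⟨_, hK U hU V hV (fun p => if hp : p.2 ∈ V then H p.1 (i hp) else p.1)
    (fun u hu v hv => ?_), ?_⟩
  · simpa [dif_pos hv, hwi hv] using hH u hu _ (hiS hv)
  · rintro _ ⟨u, hu, v, hv, rfl⟩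
    simpa [dif_pos hv] using Set.mem_image2_of_mem hu (hiS hv)

lemma exists_mem_subset_diff_union (hK : KAddPair K) {n : ℕ}
    {A : Fin (n + 2) → Set (Gamble Ω)} (F : (Fin (n + 2) → Gamble Ω) → Gamble Ω)
    (hF : ∀ g ∈ Set.univ.pi A, F g ∈ posi (Set.range g))
    (ih : ∀ G : (Fin (n + 1) → Gamble Ω) → Gamble Ω,
      (∀ g' ∈ Set.univ.pi (fun i => A i.succ), G g' ∈ posi (Set.range g')) →
      ∃ V ∈ K, V ⊆ G '' Set.univ.pi (fun i => A i.succ))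
    {a : Gamble Ω} (ha : a ∈ A 0) {U : Set (Gamble Ω)} (hU : U ∈ K) :
    ∃ U' ∈ K, U' ⊆ U \ {a} ∪ F '' Set.univ.pi A := by
  classical
  have hcons : ∀ g' ∈ Set.univ.pi (fun i => A i.succ), Fin.cons a g' ∈ Set.univ.pi A :=
    fun g' hg' => Set.mem_univ_pi.2 (Fin.cases ha fun i => hg' i trivial)
  have hsplit : ∀ g', ∃ v, g' ∈ Set.univ.pi (fun i => A i.succ) →
      v ∈ posi (Set.range g') ∧ F (Fin.cons a g') ∈ posi {a, v} := fun g' => by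
    by_cases hg' : g' ∈ Set.univ.pi (fun i => A i.succ)
    · obtain ⟨v, hv⟩ := exists_mem_posi_pair_of_mem_posi_insert (Set.range_nonempty g')
        (by simpa using hF _ (hcons g' hg'))
      exact ⟨v, fun _ => hv⟩
    · exact ⟨0, fun h => absurd h hg'⟩
  choose v hv using hsplit
  obtain ⟨V, hV, hVv⟩ := ih v fun g' hg' => (hv g' hg').1
  obtain ⟨U', hU', hU'sub⟩ := hK.exists_mem_subset_image2 hU hV hVv
    (fun u g' => if u = a then F (Fin.cons a g') else u) (fun u _ g' hg' => by
      split_ifs with hua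
      · exact hua ▸ (hv g' hg').2
      · exact mem_posi_of_mem (by simp))
  refine ⟨U', hU', hU'sub.trans ?_⟩
  rintro _ ⟨u, hu, g', hg', rfl⟩
  dsimp only
  split_ifs with hua
  · exact .inr ⟨_, hcons g' hg', rfl⟩
  · exact .inl ⟨hu, hua⟩

theorem exists_mem_subset_image_pi (hfin : ∀ A ∈ K, A.Finite) (hK : KAddPair K) (n : ℕ)
    (A : Fin (n + 1) → Set (Gamble Ω)) (hA : ∀ i, A i ∈ K) (F : (Fin (n + 1) → Gamble Ω) → Gamble Ω)
    (hF : ∀ g ∈ Set.univ.pi A, F g ∈ posi (Set.range g)) :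
    ∃ B ∈ K, B ⊆ F '' Set.univ.pi A := by
  induction n with
  | zero =>
    refine ⟨_, hK (A 0) (hA 0) (A 0) (hA 0) (fun p => F fun _ => p.1) (fun g₁ h₁ g₂ _ => ?_), ?_⟩
    · have hg₁ : (fun _ => g₁) ∈ Set.univ.pi A := fun i _ => Fin.fin_one_eq_zero i ▸ h₁
      exact posi_mono (by simp) (hF _ hg₁)
    · rintro _ ⟨g₁, h₁, -, -, rfl⟩
      exact ⟨fun _ => g₁, fun i _ => Fin.fin_one_eq_zero i ▸ h₁, rfl⟩
  | succ n ih =>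
    refine exists_mem_subset_of_forall_remove (hfin _ (hA 0))
      (fun a ha U hU => hK.exists_mem_subset_diff_union F hF (ih _ fun i => hA _) ha hU) (hA 0)
      Set.subset_union_left

end KAddPair

theorem stmt10_general {Ω : Type v} (K : Set (Set (Gamble Ω)))
    (hfin : ∀ A ∈ K, A.Finite)
    (hsup : ∀ A ∈ K, ∀ B : Set (Gamble Ω), B.Finite → A ⊆ B → B ∈ K)
    (hpair : ∀ A₁ ∈ K, ∀ A₂ ∈ K, ∀ F : Gamble Ω × Gamble Ω → Gamble Ω,
      (∀ g₁ ∈ A₁, ∀ g₂ ∈ A₂, F (g₁, g₂) ∈ posi {g₁, g₂}) →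
      {b | ∃ g₁ ∈ A₁, ∃ g₂ ∈ A₂, b = F (g₁, g₂)} ∈ K) :
    ∀ n : ℕ, 0 < n → ∀ A : Fin n → Set (Gamble Ω), (∀ i, A i ∈ K) →
      ∀ F : (Fin n → Gamble Ω) → Gamble Ω,
      (∀ g : Fin n → Gamble Ω, (∀ i, g i ∈ A i) → F g ∈ posi (Set.range g)) →
      {b | ∃ g : Fin n → Gamble Ω, (∀ i, g i ∈ A i) ∧ b = F g} ∈ K := by
  intro n hn A hA F hF
  obtain ⟨n, rfl⟩ := Nat.exists_eq_add_one_of_ne_zero hn.ne'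
  have htarget : {b | ∃ g : Fin (n + 1) → Gamble Ω, (∀ i, g i ∈ A i) ∧ b = F g} =
      F '' Set.univ.pi A := by
    ext b
    simp [eq_comm]
  obtain ⟨B, hB, hBsub⟩ := KAddPair.exists_mem_subset_image_pi hfin hpair n A hA F
    (fun g hg => hF g fun i => hg i trivial)
  rw [htarget]
  exact hsup B hB _ ((Set.Finite.pi fun i => hfin _ (hA i)).image F) hBsub

theorem stmt10 {Ω : Type v} [Nonempty Ω] (K : Set (Set (Gamble Ω)))
    (hfin : ∀ A ∈ K, A.Finite)
    (hsup : ∀ A ∈ K, ∀ B : Set (Gamble Ω), B.Finite → A ⊆ B → B ∈ K)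
    (hpair : ∀ A₁ ∈ K, ∀ A₂ ∈ K, ∀ F : Gamble Ω × Gamble Ω → Gamble Ω,
      (∀ g₁ ∈ A₁, ∀ g₂ ∈ A₂, F (g₁, g₂) ∈ posi {g₁, g₂}) →
      {b | ∃ g₁ ∈ A₁, ∃ g₂ ∈ A₂, b = F (g₁, g₂)} ∈ K) :
    ∀ n : ℕ, 0 < n → ∀ A : Fin n → Set (Gamble Ω), (∀ i, A i ∈ K) →
      ∀ F : (Fin n → Gamble Ω) → Gamble Ω,
      (∀ g : Fin n → Gamble Ω, (∀ i, g i ∈ A i) → F g ∈ posi (Set.range g)) →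
      {b | ∃ g : Fin n → Gamble Ω, (∀ i, g i ∈ A i) ∧ b = F g} ∈ K :=
  stmt10_general K hfin hsup hpair
end

section
/- 𝒦 ⊆ 𝒫(𝒢) is a coherent set of desirable gamble sets if and only if there exists a proper filter 𝔇 on the collection of coherent sets of desirable gambles (i.e. 𝔇 ≠ ∅, ∅ ∉ 𝔇, 𝔇 closed under finite intersections and under supersets within the collection of sets of coherent D's) such that B ∈ 𝒦 ⟺ {D coherent : B ∩ D ≠ ∅} ∈ 𝔇. -/
open scoped BigOperators

universe u v

/-!
Everything is phrased through `coherentMeeting B`, the coherent sets of desirable gambles that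
meet `B`. If a filter represents `K`, each axiom of `K` is a filter property; for instance a
coherent `D` meeting every `A i` contains a selection `g`, hence all of `posi (range g)`.

Conversely, `K` is represented by the filter generated by the `coherentMeeting B`, `B ∈ K`.
The point is that if every coherent `D` meeting all `A i` meets `B`, then `B ∈ K`. Take a
selection `g`. Either `desext (range g)` contains `0`, and then some `p ∈ posi (range g)` is
`≤ 0`, or it is coherent, hence meets `B`, and then some `p ∈ posi (range g)` lies below an
element of `B` (unless that element is positive, a case settled by the singleton axiom).
Finite addition gathers these `p` into a member of `K`; raising each `p` to its element of `B`,
or to `0` when `p ≤ 0`, and discarding `0` lands inside `B`.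
-/

open Set

section Posi
variable {Ω : Type v}

theorem posi_induction_s17 {S : Set (Gamble Ω)} {P : Gamble Ω → Prop}
    (smul : ∀ g ∈ S, ∀ l : ℝ, 0 < l → P (l • g)) (add : ∀ f g, P f → P g → P (f + g))
    {f : Gamble Ω} (hf : f ∈ posi S) : P f := by
  obtain ⟨n, hn, l, g, hl, hg, rfl⟩ := hf
  exact Finset.sum_induction_nonempty _ P add ⟨⟨0, hn⟩, Finset.mem_univ _⟩
    fun i _ => smul _ (hg i) _ (hl i)

theorem subset_posi (S : Set (Gamble Ω)) : S ⊆ posi S := fun g hg =>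
  ⟨1, one_pos, fun _ => 1, fun _ => g, fun _ => one_pos, fun _ => hg, by simp⟩

theorem posi_add {S : Set (Gamble Ω)} {f g : Gamble Ω} (hf : f ∈ posi S) (hg : g ∈ posi S) :
    f + g ∈ posi S := by
  obtain ⟨n, hn, l, f, hl, hf, rfl⟩ := hf
  obtain ⟨m, -, l', g, hl', hg, rfl⟩ := hg
  refine ⟨n + m, by omega, Fin.append l l', Fin.append f g, Fin.addCases ?_ ?_,
    Fin.addCases ?_ ?_, ?_⟩
  all_goals simp [Fin.sum_univ_add, *]

theorem posi_smul {S : Set (Gamble Ω)} {f : Gamble Ω} {c : ℝ} (hc : 0 < c) (hf : f ∈ posi S) :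
    c • f ∈ posi S := by
  obtain ⟨n, hn, l, g, hl, hg, rfl⟩ := hf
  exact ⟨n, hn, fun i => c * l i, g, fun i => mul_pos hc (hl i), hg, by
    simp [Finset.smul_sum, smul_smul]⟩

theorem CoherentD.posi_subset {D S : Set (Gamble Ω)} (hD : CoherentD D) (hS : S ⊆ D) :
    posi S ⊆ D := fun _ =>
  posi_induction_s17 (fun g hg l hl => hD.2.2.1 g (hS hg) l hl) fun f g hf hg => hD.2.2.2 f hf g hg

theorem coherentD_desext {E : Set (Gamble Ω)} (h0 : (0 : Gamble Ω) ∉ desext E) :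
    CoherentD (desext E) :=
  ⟨h0, fun _ hg => subset_posi _ (Or.inr hg), fun _ hg _ hl => posi_smul hl hg,
    fun _ hf _ hg => posi_add hf hg⟩

end Posi

section Dominance
variable {Ω : Type v}

theorem gle_refl (f : Gamble Ω) : gle f f := fun _ => le_rfl

theorem gle_add {f₁ f₂ g₁ g₂ : Gamble Ω} (h₁ : gle f₁ g₁) (h₂ : gle f₂ g₂) :
    gle (f₁ + f₂) (g₁ + g₂) := fun ω => by
  simpa using add_le_add (h₁ ω) (h₂ ω)

theorem gle_add_of_mem_Gpos {p f g : Gamble Ω} (hp : gle p g) (hf : f ∈ Gpos Ω) :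
    gle p (f + g) := by
  simpa using gle_add hf.1 hp

theorem Gpos_add {f g : Gamble Ω} (hf : f ∈ Gpos Ω) (hg : g ∈ Gpos Ω) : f + g ∈ Gpos Ω := by
  refine ⟨gle_add_of_mem_Gpos hg.1 hf, fun h => hf.2 (Subtype.ext (funext fun ω => ?_))⟩
  have hsum := congrFun (congrArg Subtype.val h) ω
  have hf₀ := hf.1 ω
  have hg₀ := hg.1 ω
  simp only [ZeroMemClass.coe_zero, Pi.zero_apply, AddMemClass.coe_add, Pi.add_apply] at *
  linarith

theorem Gpos_smul {g : Gamble Ω} {c : ℝ} (hc : 0 < c) (hg : g ∈ Gpos Ω) : c • g ∈ Gpos Ω :=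
  ⟨fun ω => by simpa using mul_nonneg hc.le (by simpa using hg.1 ω), smul_ne_zero hc.ne' hg.2⟩

theorem sub_mem_Gpos {f g : Gamble Ω} (hfg : gle f g) (hne : f ≠ g) : g - f ∈ Gpos Ω :=
  ⟨fun ω => by simpa using hfg ω, sub_ne_zero_of_ne hne.symm⟩

theorem CoherentD.mem_of_gle {D : Set (Gamble Ω)} (hD : CoherentD D) {f g : Gamble Ω}
    (hf : f ∈ D) (hfg : gle f g) : g ∈ D := by
  obtain rfl | hne := eq_or_ne f g
  · exact hf
  · simpa using hD.2.2.2 f hf _ (hD.2.1 (sub_mem_Gpos hfg hne))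

theorem Gpos_or_exists_posi_gle_of_mem_desext {S : Set (Gamble Ω)} {f : Gamble Ω}
    (hf : f ∈ desext S) : f ∈ Gpos Ω ∨ ∃ p ∈ posi S, gle p f := by
  refine posi_induction_s17 (P := fun f => f ∈ Gpos Ω ∨ ∃ p ∈ posi S, gle p f)
    (fun g hg l hl => ?_) (fun f g hf hg => ?_) hf
  · rcases hg with hg | hg
    · exact .inr ⟨l • g, posi_smul hl (subset_posi S hg), gle_refl _⟩
    · exact .inl (Gpos_smul hl hg)
  · rcases hf with hf | ⟨p, hp, hpf⟩ <;> rcases hg with hg | ⟨q, hq, hqg⟩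
    · exact .inl (Gpos_add hf hg)
    · exact .inr ⟨q, hq, gle_add_of_mem_Gpos hqg hf⟩
    · exact .inr ⟨p, hp, add_comm g f ▸ gle_add_of_mem_Gpos hpf hg⟩
    · exact .inr ⟨p + q, posi_add hp hq, gle_add hpf hqg⟩

theorem Gpos_nonempty [Nonempty Ω] : (Gpos Ω).Nonempty := by
  refine ⟨⟨fun _ => 1, 1, fun _ => by simp⟩, fun _ => by simp, fun h => ?_⟩
  simpa using congrFun (congrArg Subtype.val h) (Classical.arbitrary Ω)

end Dominance

theorem Set.iInter_mem_of_inter_mem {α ι : Type*} [Fintype ι] [Nonempty ι] {𝔇 : Set (Set α)}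
    (h𝔇 : ∀ s ∈ 𝔇, ∀ t ∈ 𝔇, s ∩ t ∈ 𝔇) {s : ι → Set α} (hs : ∀ i, s i ∈ 𝔇) :
    ⋂ i, s i ∈ 𝔇 := by
  have h := Finset.inf'_induction Finset.univ_nonempty s h𝔇 fun i _ => hs i
  rwa [Finset.inf'_univ_eq_ciInf] at h

section Meeting
variable {Ω : Type v}

def coherentMeeting (B : Set (Gamble Ω)) : Set (Set (Gamble Ω)) :=
  {D | CoherentD D ∧ (B ∩ D).Nonempty}

@[simp]
theorem coherentMeeting_empty : coherentMeeting (∅ : Set (Gamble Ω)) = ∅ := by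
  simp [coherentMeeting]

theorem coherentMeeting_mono {A B : Set (Gamble Ω)} (h : A ⊆ B) :
    coherentMeeting A ⊆ coherentMeeting B :=
  fun _ ⟨hD, hAD⟩ => ⟨hD, hAD.mono (inter_subset_inter_left _ h)⟩

theorem coherentMeeting_diff_zero (A : Set (Gamble Ω)) :
    coherentMeeting (A \ {0}) = coherentMeeting A := by
  refine (coherentMeeting_mono sdiff_subset).antisymm fun D ⟨hD, f, hfA, hfD⟩ => ?_
  exact ⟨hD, f, ⟨hfA, fun hf0 => hD.1 (hf0 ▸ hfD)⟩, hfD⟩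

theorem CoherentD.mem_coherentMeeting_singleton {D : Set (Gamble Ω)} (hD : CoherentD D)
    {g : Gamble Ω} (hg : g ∈ Gpos Ω) : D ∈ coherentMeeting {g} :=
  ⟨hD, g, rfl, hD.2.1 hg⟩

theorem coherentMeeting_subset_image {A : Set (Gamble Ω)} {F : Gamble Ω → Gamble Ω}
    (hF : ∀ g ∈ A, gle g (F g)) : coherentMeeting A ⊆ coherentMeeting (F '' A) :=
  fun _ ⟨hD, f, hfA, hfD⟩ => ⟨hD, F f, mem_image_of_mem F hfA, hD.mem_of_gle hfD (hF f hfA)⟩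

theorem iInter_coherentMeeting_subset_of_posi {ι : Type*} [Nonempty ι] {A : ι → Set (Gamble Ω)}
    {F : (ι → Gamble Ω) → Gamble Ω} (hF : ∀ g, (∀ i, g i ∈ A i) → F g ∈ posi (range g)) :
    ⋂ i, coherentMeeting (A i) ⊆ coherentMeeting {b | ∃ g, (∀ i, g i ∈ A i) ∧ b = F g} := by
  intro D hD
  rw [mem_iInter] at hD
  have hDcoh : CoherentD D := (hD (Classical.arbitrary ι)).1
  choose g hgA hgD using fun i => (hD i).2
  exact ⟨hDcoh, F g, ⟨g, hgA, rfl⟩, hDcoh.posi_subset (range_subset_iff.2 hgD) (hF g hgA)⟩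

end Meeting

section Representation
variable {Ω : Type v}

theorem coherentK_of_filter {K : Set (Set (Gamble Ω))} {𝔇 : Set (Set (Set (Gamble Ω)))}
    (hcoh : ∀ 𝔻 ∈ 𝔇, ∀ D ∈ 𝔻, CoherentD D) (hne : 𝔇.Nonempty) (hempty : ∅ ∉ 𝔇)
    (hinter : ∀ 𝔻₁ ∈ 𝔇, ∀ 𝔻₂ ∈ 𝔇, 𝔻₁ ∩ 𝔻₂ ∈ 𝔇)
    (hup : ∀ 𝔻₁ ∈ 𝔇, ∀ 𝔻₂ : Set (Set (Gamble Ω)),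
      (∀ D ∈ 𝔻₂, CoherentD D) → 𝔻₁ ⊆ 𝔻₂ → 𝔻₂ ∈ 𝔇)
    (hK : ∀ B, B ∈ K ↔ coherentMeeting B ∈ 𝔇) : CoherentK K := by
  have of_subset {𝔻 : Set (Set (Gamble Ω))} (h𝔻 : 𝔻 ∈ 𝔇) {B : Set (Gamble Ω)}
      (hB : 𝔻 ⊆ coherentMeeting B) : B ∈ K :=
    (hK B).2 (hup 𝔻 h𝔻 _ (fun _ hD => hD.1) hB)
  obtain ⟨𝔻₀, h𝔻₀⟩ := hne
  refine ⟨fun h => hempty (by simpa using (hK ∅).1 h), fun A hA => ?_,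
    fun g hg => of_subset h𝔻₀ fun D hD => (hcoh 𝔻₀ h𝔻₀ D hD).mem_coherentMeeting_singleton hg,
    fun A hA B hAB => of_subset ((hK A).1 hA) (coherentMeeting_mono hAB),
    fun A hA F hF => of_subset ((hK A).1 hA) (coherentMeeting_subset_image hF),
    fun n hn A hA F hF => ?_⟩
  · rw [hK, coherentMeeting_diff_zero]
    exact (hK A).1 hA
  · have : Nonempty (Fin n) := Fin.pos_iff_nonempty.1 hn
    exact of_subset (iInter_mem_of_inter_mem hinter fun i => (hK (A i)).1 (hA i))
      (iInter_coherentMeeting_subset_of_posi hF)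

namespace CoherentK

variable {K : Set (Set (Gamble Ω))}

theorem mem_of_forall_gle (hK : CoherentK K) {B C : Set (Gamble Ω)} (hC : C ∈ K)
    (hCB : ∀ c ∈ C, gle c 0 ∨ ∃ f ∈ B, gle c f) : B ∈ K := by
  classical
  obtain ⟨-, hdiff, -, hsuper, hdom, -⟩ := hK
  let G : Gamble Ω → Gamble Ω := fun c => if h : ∃ f ∈ B, gle c f then h.choose else 0
  have hG : ∀ c ∈ C, gle c (G c) := by
    intro c hc
    by_cases h : ∃ f ∈ B, gle c f
    · simpa only [G, dif_pos h] using h.choose_spec.2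
    · simpa only [G, dif_neg h] using (hCB c hc).resolve_right h
  refine hsuper _ (hdiff _ (hdom C hC G hG)) B ?_
  rintro _ ⟨⟨c, -, rfl⟩, hc0⟩
  by_cases h : ∃ f ∈ B, gle c f
  · simpa only [G, dif_pos h] using h.choose_spec.1
  · exact absurd (dif_neg h) hc0

theorem exists_mem_forall_of_posi (hK : CoherentK K) {n : ℕ} (hn : 0 < n)
    {A : Fin n → Set (Gamble Ω)} (hA : ∀ i, A i ∈ K) {Q : Gamble Ω → Prop}
    (hQ : ∀ g : Fin n → Gamble Ω, (∀ i, g i ∈ A i) → ∃ p ∈ posi (range g), Q p) :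
    ∃ C ∈ K, ∀ c ∈ C, Q c := by
  classical
  let F : (Fin n → Gamble Ω) → Gamble Ω :=
    fun g => if h : ∀ i, g i ∈ A i then (hQ g h).choose else 0
  have hF : ∀ g, (∀ i, g i ∈ A i) → F g ∈ posi (range g) ∧ Q (F g) := fun g h => by
    simpa only [F, dif_pos h] using (hQ g h).choose_spec
  exact ⟨_, hK.2.2.2.2.2 n hn A hA F fun g h => (hF g h).1, fun _ ⟨g, h, hc⟩ => hc ▸ (hF g h).2⟩

theorem mem_of_iInter_coherentMeeting_subset (hK : CoherentK K) {n : ℕ} (hn : 0 < n)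
    {A : Fin n → Set (Gamble Ω)} (hA : ∀ i, A i ∈ K) {B : Set (Gamble Ω)}
    (hB : ⋂ i, coherentMeeting (A i) ⊆ coherentMeeting B) : B ∈ K := by
  by_cases hBpos : ∃ f ∈ B, f ∈ Gpos Ω
  · obtain ⟨f, hfB, hf⟩ := hBpos
    exact hK.2.2.2.1 _ (hK.2.2.1 f hf) B (singleton_subset_iff.2 hfB)
  push Not at hBpos
  suffices ∀ g : Fin n → Gamble Ω, (∀ i, g i ∈ A i) →
      ∃ p ∈ posi (range g), gle p 0 ∨ ∃ f ∈ B, gle p f by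
    obtain ⟨C, hC, hCB⟩ := hK.exists_mem_forall_of_posi hn hA this
    exact hK.mem_of_forall_gle hC hCB
  intro g hg
  by_cases h0 : (0 : Gamble Ω) ∈ desext (range g)
  · obtain h | ⟨p, hp, hp0⟩ := Gpos_or_exists_posi_gle_of_mem_desext h0
    · exact absurd rfl h.2
    · exact ⟨p, hp, .inl hp0⟩
  · obtain ⟨-, f, hfB, hfD⟩ := hB (mem_iInter.2 fun i =>
      ⟨coherentD_desext h0, g i, hg i, subset_posi _ (.inl ⟨i, rfl⟩)⟩)
    obtain h | ⟨p, hp, hpf⟩ := Gpos_or_exists_posi_gle_of_mem_desext hfD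
    · exact absurd h (hBpos f hfB)
    · exact ⟨p, hp, .inr ⟨f, hfB, hpf⟩⟩

end CoherentK

def representingFilter (K : Set (Set (Gamble Ω))) : Set (Set (Set (Gamble Ω))) :=
  {𝔻 | (∀ D ∈ 𝔻, CoherentD D) ∧ ∃ n, 0 < n ∧ ∃ A : Fin n → Set (Gamble Ω),
    (∀ i, A i ∈ K) ∧ ⋂ i, coherentMeeting (A i) ⊆ 𝔻}

theorem representingFilter_inter_mem {K : Set (Set (Gamble Ω))} {𝔻₁ 𝔻₂ : Set (Set (Gamble Ω))}
    (h₁ : 𝔻₁ ∈ representingFilter K) (h₂ : 𝔻₂ ∈ representingFilter K) :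
    𝔻₁ ∩ 𝔻₂ ∈ representingFilter K := by
  obtain ⟨hcoh, n, hn, A, hA, hsub₁⟩ := h₁
  obtain ⟨-, m, -, A', hA', hsub₂⟩ := h₂
  refine ⟨fun D hD => hcoh D hD.1, n + m, by omega, Fin.append A A',
    Fin.addCases (by simpa using hA) (by simpa using hA'), fun D hD => ?_⟩
  rw [mem_iInter] at hD
  exact ⟨hsub₁ (mem_iInter.2 fun i => by simpa using hD (Fin.castAdd m i)),
    hsub₂ (mem_iInter.2 fun i => by simpa using hD (Fin.natAdd n i))⟩

theorem representingFilter_superset_mem {K : Set (Set (Gamble Ω))} {𝔻₁ 𝔻₂ : Set (Set (Gamble Ω))}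
    (h₁ : 𝔻₁ ∈ representingFilter K) (hcoh : ∀ D ∈ 𝔻₂, CoherentD D) (h : 𝔻₁ ⊆ 𝔻₂) :
    𝔻₂ ∈ representingFilter K :=
  have ⟨_, n, hn, A, hA, hsub⟩ := h₁
  ⟨hcoh, n, hn, A, hA, hsub.trans h⟩

namespace CoherentK

variable {K : Set (Set (Gamble Ω))}

theorem representingFilter_nonempty [Nonempty Ω] (hK : CoherentK K) :
    (representingFilter K).Nonempty :=
  have ⟨g, hg⟩ := Gpos_nonempty (Ω := Ω)
  ⟨_, fun _ hD => hD.1, 1, one_pos, fun _ => {g}, fun _ => hK.2.2.1 g hg, iInter_subset _ 0⟩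

theorem empty_notMem_representingFilter (hK : CoherentK K) : ∅ ∉ representingFilter K :=
  fun ⟨_, _, hn, _, hA, hsub⟩ =>
    hK.1 (hK.mem_of_iInter_coherentMeeting_subset hn hA (by simpa using hsub))

theorem mem_iff_coherentMeeting_mem (hK : CoherentK K) (B : Set (Gamble Ω)) :
    B ∈ K ↔ coherentMeeting B ∈ representingFilter K :=
  ⟨fun hB => ⟨fun _ hD => hD.1, 1, one_pos, fun _ => B, fun _ => hB, iInter_subset _ 0⟩,
    fun ⟨_, _, hn, _, hA, hsub⟩ => hK.mem_of_iInter_coherentMeeting_subset hn hA hsub⟩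

end CoherentK

end Representation

theorem stmt17 {Ω : Type v} [Nonempty Ω] (K : Set (Set (Gamble Ω))) :
    CoherentK K ↔
    ∃ 𝔇 : Set (Set (Set (Gamble Ω))),
      (∀ 𝔻 ∈ 𝔇, ∀ D ∈ 𝔻, CoherentD D) ∧
      𝔇.Nonempty ∧ (∅ : Set (Set (Gamble Ω))) ∉ 𝔇 ∧
      (∀ 𝔻₁ ∈ 𝔇, ∀ 𝔻₂ ∈ 𝔇, 𝔻₁ ∩ 𝔻₂ ∈ 𝔇) ∧
      (∀ 𝔻₁ ∈ 𝔇, ∀ 𝔻₂ : Set (Set (Gamble Ω)),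
        (∀ D ∈ 𝔻₂, CoherentD D) → 𝔻₁ ⊆ 𝔻₂ → 𝔻₂ ∈ 𝔇) ∧
      (∀ B : Set (Gamble Ω),
        B ∈ K ↔ {D : Set (Gamble Ω) | CoherentD D ∧ (B ∩ D).Nonempty} ∈ 𝔇) := by
  refine ⟨fun hK => ?_, fun ⟨𝔇, hcoh, hne, hempty, hinter, hup, hiff⟩ =>
    coherentK_of_filter hcoh hne hempty hinter hup hiff⟩
  exact ⟨representingFilter K, fun _ h => h.1, hK.representingFilter_nonempty,
    hK.empty_notMem_representingFilter, fun _ h₁ _ h₂ => representingFilter_inter_mem h₁ h₂,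
    fun _ h₁ _ hcoh h => representingFilter_superset_mem h₁ hcoh h, hK.mem_iff_coherentMeeting_mem⟩
end
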